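/- Let m ∈ ℕ, A ⊆ ℕ^m be a complete set of multi-indices, and let P_A be nodes generated per the essential assumptions. Let f : ℝ^m → ℝ be any function. Then there exist unique coefficients c_α ∈ ℝ, α ∈ A, such that the polynomial Q_{f,A}(x) = Σ_{α∈A} c_α N_α(x) satisfies Q_{f,A}(p_β) = f(p_β) for all β ∈ A; moreover Q_{f,A} is the unique polynomial in Π_A interpolating f on P_A. -/

import Mathlib

open MvPolynomial
open scoped Classical

noncomputable section

/-- The polynomial space `Π_A` spanned by the monomials `x^α`, `α ∈ A`. -/
def PiA (m : ℕ) (A : Finset (Fin m → ℕ)) : Submodule ℝ (MvPolynomial (Fin m) ℝ) :=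
  Submodule.span ℝ ((fun α : Fin m → ℕ => ∏ i, X i ^ α i) '' ↑A)

/-- `A ⊆ ℕ^m` is a complete (downward closed) set of multi-indices. -/
def CompleteIdx {m : ℕ} (A : Finset (Fin m → ℕ)) : Prop :=
  ∀ α ∈ A, ∀ β : Fin m → ℕ, (∀ i, β i ≤ α i) → β ∈ A

/-- The node `p_α = (p_{α₁,1},…,p_{α_m,m})` generated from generating nodes `p`. -/
def node {m : ℕ} (p : Fin m → ℕ → ℝ) (α : Fin m → ℕ) : Fin m → ℝ := fun i => p i (α i)

/-- The generating nodes `p_{0,i},…,p_{n_i,i}`, `n_i = max_{α∈A} α_i`, are pairwise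
distinct in each dimension `i` (essential assumptions, Definition 2.8). -/
def GenDistinct {m : ℕ} (A : Finset (Fin m → ℕ)) (p : Fin m → ℕ → ℝ) : Prop :=
  ∀ i : Fin m, ∀ j k : ℕ, j ≤ A.sup (fun α => α i) → k ≤ A.sup (fun α => α i) →
    p i j = p i k → j = k

/-- The multivariate Newton polynomial `N_α(x) = ∏_i ∏_{j<α_i} (x_i - p_{j,i})`. -/
def newton {m : ℕ} (p : Fin m → ℕ → ℝ) (α : Fin m → ℕ) : MvPolynomial (Fin m) ℝ :=
  ∏ i, ∏ j ∈ Finset.range (α i), (X i - C (p i j))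

/-- `P` is unisolvent with respect to the polynomial subspace `W`: the only
polynomial in `W` vanishing on all of `P` is `0`. -/
def Unisolvent {m : ℕ} (P : Set (Fin m → ℝ)) (W : Submodule ℝ (MvPolynomial (Fin m) ℝ)) :
    Prop :=
  ∀ Q ∈ W, (∀ x ∈ P, eval x Q = 0) → Q = 0

/-! The Newton polynomial `N_α` vanishes at `p_β` unless `α ≤ β` componentwise, and `N_β(p_β) ≠ 0`
because the generating nodes are distinct; so the matrix `(N_α(p_β))_{β,α}` is triangular for the
componentwise order with nonzero diagonal, hence invertible. Completeness of `A` puts every `N_α`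
in `Π_A`, whose dimension is at most `|A|`; hence the `N_α` form a basis of `Π_A` and `P_A` is
unisolvent for `Π_A`. -/

open scoped Matrix

theorem Matrix.mulVec_injective_of_triangular {ι R : Type*} [Fintype ι] [PartialOrder ι]
    [Ring R] [NoZeroDivisors R] {M : Matrix ι ι R} (htri : ∀ i j, M i j ≠ 0 → j ≤ i)
    (hdiag : ∀ i, M i i ≠ 0) : Function.Injective M.mulVec := by
  intro u v huv
  rw [← sub_eq_zero]
  set w := u - v
  have hw : M *ᵥ w = 0 := by rw [Matrix.mulVec_sub, huv, sub_self]
  by_contra hne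
  -- At an index `i` minimal in the support of `w`, row `i` of `M *ᵥ w` only sees `w i`.
  obtain ⟨i, hi, hmin⟩ :=
    exists_minimal_of_wellFoundedLT (fun i => w i ≠ 0) (Function.ne_iff.1 hne)
  have hrow : (M *ᵥ w) i = M i i * w i := by
    refine Finset.sum_eq_single i (fun j _ hji => ?_) (by simp)
    by_contra hj
    obtain ⟨hMij, hwj⟩ := mul_ne_zero_iff.1 hj
    exact hji (le_antisymm (htri i j hMij) (hmin hwj (htri i j hMij)))
  exact mul_ne_zero (hdiag i) hi (hrow ▸ congrFun hw i)

theorem eval_node_newton {m : ℕ} (p : Fin m → ℕ → ℝ) (α β : Fin m → ℕ) :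
    eval (node p β) (newton p α) = ∏ i, ∏ j ∈ Finset.range (α i), (p i (β i) - p i j) := by
  simp [newton, node]

theorem eval_node_newton_eq_zero_of_not_le {m : ℕ} (p : Fin m → ℕ → ℝ) {α β : Fin m → ℕ}
    (h : ¬α ≤ β) : eval (node p β) (newton p α) = 0 := by
  obtain ⟨i, hi⟩ := not_forall.1 (Pi.le_def.not.1 h)
  rw [eval_node_newton]
  exact Finset.prod_eq_zero (Finset.mem_univ i)
    (Finset.prod_eq_zero (Finset.mem_range.2 (not_le.1 hi)) (sub_self _))

theorem eval_node_newton_self_ne_zero {m : ℕ} {A : Finset (Fin m → ℕ)} {p : Fin m → ℕ → ℝ}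
    (hp : GenDistinct A p) {β : Fin m → ℕ} (hβ : β ∈ A) :
    eval (node p β) (newton p β) ≠ 0 := by
  rw [eval_node_newton]
  refine Finset.prod_ne_zero_iff.2 fun i _ => Finset.prod_ne_zero_iff.2 fun j hj => ?_
  have hj : j < β i := Finset.mem_range.1 hj
  have hβi : β i ≤ A.sup (fun α => α i) := Finset.le_sup (f := fun α => α i) hβ
  exact sub_ne_zero.2 fun h => hj.ne' (hp i _ _ hβi (hj.le.trans hβi) h)

theorem degreeOf_newton_le {m : ℕ} (p : Fin m → ℕ → ℝ) (α : Fin m → ℕ) (i : Fin m) :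
    degreeOf i (newton p α) ≤ α i := by
  have hfactor : ∀ k c,
      degreeOf i (X k - C c : MvPolynomial (Fin m) ℝ) ≤ if i = k then 1 else 0 :=
    fun k c => (degreeOf_sub_le _ _ _).trans (by simp [degreeOf_X, degreeOf_C])
  calc degreeOf i (newton p α)
      ≤ ∑ k, ∑ j ∈ Finset.range (α k), degreeOf i (X k - C (p k j) : MvPolynomial (Fin m) ℝ) :=
        (degreeOf_prod_le _ _ _).trans (Finset.sum_le_sum fun k _ => degreeOf_prod_le _ _ _)
    _ ≤ ∑ k, ∑ _j ∈ Finset.range (α k), if i = k then 1 else 0 :=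
        Finset.sum_le_sum fun k _ => Finset.sum_le_sum fun j _ => hfactor k _
    _ = α i := by simp

theorem mem_PiA_of_support {m : ℕ} {A : Finset (Fin m → ℕ)} {Q : MvPolynomial (Fin m) ℝ}
    (hQ : ∀ d ∈ Q.support, ⇑d ∈ A) : Q ∈ PiA m A := by
  rw [Q.as_sum]
  refine Submodule.sum_mem _ fun d hd => ?_
  have hmonomial : (∏ i, X i ^ d i : MvPolynomial (Fin m) ℝ) = monomial d 1 := by
    rw [← prod_X_pow_eq_monomial]
    exact (Finsupp.prod_fintype d (fun i n => X i ^ n) fun i => pow_zero _).symm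
  rw [← mul_one (coeff d Q), ← smul_eq_mul, ← smul_monomial, ← hmonomial]
  exact Submodule.smul_mem _ _ (Submodule.subset_span ⟨d, hQ d hd, rfl⟩)

theorem newton_mem_PiA {m : ℕ} {A : Finset (Fin m → ℕ)} (hA : CompleteIdx A)
    (p : Fin m → ℕ → ℝ) {α : Fin m → ℕ} (hα : α ∈ A) : newton p α ∈ PiA m A :=
  mem_PiA_of_support fun d hd =>
    hA α hα d fun i => (degreeOf_le_iff.1 le_rfl d hd).trans (degreeOf_newton_le p α i)

instance PiA.finiteDimensional (m : ℕ) (A : Finset (Fin m → ℕ)) : FiniteDimensional ℝ (PiA m A) :=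
  FiniteDimensional.span_of_finite ℝ (A.finite_toSet.image _)

theorem finrank_PiA_le (m : ℕ) (A : Finset (Fin m → ℕ)) :
    Module.finrank ℝ (PiA m A) ≤ A.card := by
  rw [PiA, ← Finset.coe_image]
  exact (finrank_span_finset_le_card _).trans Finset.card_image_le

def newtonEvalMatrix {m : ℕ} (p : Fin m → ℕ → ℝ) (A : Finset (Fin m → ℕ)) :
    Matrix {α // α ∈ A} {α // α ∈ A} ℝ :=
  Matrix.of fun β α => eval (node p β) (newton p α)

section NewtonBasis

variable {m : ℕ} {A : Finset (Fin m → ℕ)} {p : Fin m → ℕ → ℝ}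

theorem eval_node_sum_smul_newton (c : {α // α ∈ A} → ℝ) (β : {α // α ∈ A}) :
    eval (node p β) (∑ α, c α • newton p α) = (newtonEvalMatrix p A *ᵥ c) β := by
  simp [newtonEvalMatrix, Matrix.mulVec, dotProduct, mul_comm]

theorem newtonEvalMatrix_mulVec_injective (hp : GenDistinct A p) :
    Function.Injective (newtonEvalMatrix p A).mulVec :=
  Matrix.mulVec_injective_of_triangular
    (fun _ _ h => not_not.1 fun hle => h (eval_node_newton_eq_zero_of_not_le p hle))
    (fun β => eval_node_newton_self_ne_zero hp β.2)

theorem linearIndependent_newton (hp : GenDistinct A p) :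
    LinearIndependent ℝ fun α : {α // α ∈ A} => newton p α := by
  refine Fintype.linearIndependent_iff.2 fun c hc => congrFun (?_ : c = 0)
  refine newtonEvalMatrix_mulVec_injective hp (funext fun β => ?_)
  rw [Matrix.mulVec_zero, ← eval_node_sum_smul_newton, hc, map_zero, Pi.zero_apply]

theorem span_newton_eq_PiA (hA : CompleteIdx A) (hp : GenDistinct A p) :
    Submodule.span ℝ (Set.range fun α : {α // α ∈ A} => newton p α) = PiA m A := by
  refine Submodule.eq_of_le_of_finrank_le ?_ ?_
  · exact Submodule.span_le.2 (Set.range_subset_iff.2 fun α => newton_mem_PiA hA p α.2)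
  · rw [finrank_span_eq_card (linearIndependent_newton hp), Fintype.card_coe]
    exact finrank_PiA_le m A

theorem unisolvent_node_image (hA : CompleteIdx A) (hp : GenDistinct A p) :
    Unisolvent (node p '' A) (PiA m A) := by
  intro Q hQ hzero
  rw [← span_newton_eq_PiA hA hp, Submodule.mem_span_range_iff_exists_fun] at hQ
  obtain ⟨c, rfl⟩ := hQ
  have hc : c = 0 := newtonEvalMatrix_mulVec_injective hp <| funext fun β => by
    rw [← eval_node_sum_smul_newton, hzero _ ⟨β, β.2, rfl⟩, Matrix.mulVec_zero, Pi.zero_apply]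
  simp [hc]

end NewtonBasis

/-- (Multivariate Newton interpolation.) For any function `f`, there
are unique coefficients `c_α`, `α ∈ A`, such that `Q_{f,A} = Σ_{α∈A} c_α N_α`
interpolates `f` on `P_A`; moreover `Q_{f,A}` is the unique interpolant of `f` in `Π_A`. -/
theorem newton_interpolation (m : ℕ) (A : Finset (Fin m → ℕ))
    (hA : CompleteIdx A) (p : Fin m → ℕ → ℝ) (hp : GenDistinct A p)
    (f : (Fin m → ℝ) → ℝ) :
    (∃! c : {α // α ∈ A} → ℝ,
      ∀ β ∈ A, eval (node p β) (∑ α ∈ A.attach, c α • newton p ↑α) = f (node p β)) ∧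
    (∀ c : {α // α ∈ A} → ℝ,
      (∀ β ∈ A, eval (node p β) (∑ α ∈ A.attach, c α • newton p ↑α) = f (node p β)) →
      ∀ Q ∈ PiA m A, (∀ β ∈ A, eval (node p β) Q = f (node p β)) →
        Q = ∑ α ∈ A.attach, c α • newton p ↑α) := by
  simp only [← Finset.univ_eq_attach]
  have hinj := newtonEvalMatrix_mulVec_injective hp
  have hinterp : ∀ c : {α // α ∈ A} → ℝ,
      (∀ β ∈ A, eval (node p β) (∑ α, c α • newton p α) = f (node p β)) ↔
        newtonEvalMatrix p A *ᵥ c = fun β : {α // α ∈ A} => f (node p β) := by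
    intro c
    rw [_root_.funext_iff, Subtype.forall]
    exact forall₂_congr fun β hβ => by rw [← eval_node_sum_smul_newton c ⟨β, hβ⟩]
  refine ⟨?_, fun c hc Q hQ hQf => ?_⟩
  · obtain ⟨c, hc⟩ := Matrix.mulVec_surjective_iff_isUnit.2
      (Matrix.mulVec_injective_iff_isUnit.1 hinj) fun β => f (node p β)
    exact ⟨c, (hinterp c).2 hc, fun c' hc' => hinj (((hinterp c').1 hc').trans hc.symm)⟩
  · have hsum : ∑ α : {α // α ∈ A}, c α • newton p α ∈ PiA m A :=
      Submodule.sum_mem _ fun α _ => Submodule.smul_mem _ _ (newton_mem_PiA hA p α.2)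
    refine sub_eq_zero.1 (unisolvent_node_image hA hp _ (Submodule.sub_mem _ hQ hsum) ?_)
    rintro _ ⟨β, hβ, rfl⟩
    rw [eval_sub, hQf β hβ, hc β hβ, sub_self]

end
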